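/- Let P be a toric (fs and torsion-free) monoid, X = Spec ℂ[P], and x a point of X. Let 𝔟 be the prime ideal of P given by the inverse image of the maximal ideal of the local ring O_{X,x} under P → ℂ[P] → O_{X,x}. Then 𝔟 is a prime ideal of the monoid P, the closed subscheme Spec(ℂ[P]/(𝔟)) has underlying reduced ring ℂ[P∖𝔟], and Spec ℂ[(P∖𝔟)^{gp}] is a smooth open subscheme of Spec ℂ[P∖𝔟] containing x. -/

import Mathlib

/-!
STATEMENT 9: Let `P` be a toric (fs and torsion-free) monoid, `X = Spec ℂ[P]`, `x ∈ X`
(i.e. a prime ideal `q` of `ℂ[P]`), and let `𝔟 ⊆ P` be the inverse image of the maximal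
ideal of `O_{X,x}` under `P → ℂ[P] → O_{X,x}`.  Then `𝔟` is a prime ideal of the monoid
`P`, the closed subscheme `Spec (ℂ[P]/(𝔟))` has (reduced) coordinate ring `ℂ[P∖𝔟]`, and
`Spec ℂ[(P∖𝔟)^{gp}]` is a smooth open subscheme (a localization) of `Spec ℂ[P∖𝔟]`
containing `x`.

We model the toric monoid `P` as a finitely generated, saturated submonoid of a lattice
`G` (a finite free ℤ-module), `ℂ[P] = AddMonoidAlgebra ℂ P`, and `O_{X,x}` as the
localization at the prime `q`.
-/

open AddMonoidAlgebra

noncomputable section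

theorem auxLoc {M H : Type} [AddCommMonoid M] [AddCommGroup H] (φ : M →+ H)
    (hinj : Function.Injective φ) (hsurj : ∀ h : H, ∃ a b : M, φ a - φ b = h) :
    letI : Algebra (AddMonoidAlgebra ℂ M) (AddMonoidAlgebra ℂ H) :=
      (AddMonoidAlgebra.mapDomainRingHom ℂ φ).toAlgebra
    IsLocalization
      (Submonoid.closure (Set.range fun m : M => AddMonoidAlgebra.single m (1 : ℂ)))
      (AddMonoidAlgebra ℂ H) := by
  letI : Algebra (AddMonoidAlgebra ℂ M) (AddMonoidAlgebra ℂ H) :=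
    (AddMonoidAlgebra.mapDomainRingHom ℂ φ).toAlgebra
  have hmap : ∀ (a : M) (c : ℂ),
      algebraMap (AddMonoidAlgebra ℂ M) (AddMonoidAlgebra ℂ H)
        (AddMonoidAlgebra.single a c) = AddMonoidAlgebra.single (φ a) c := by
    intro a c
    show AddMonoidAlgebra.mapDomainRingHom ℂ φ (AddMonoidAlgebra.single a c) = _
    simp [AddMonoidAlgebra.mapDomainRingHom_apply, Finsupp.mapDomain_single]
  refine ⟨⟨?_, ?_, ?_⟩⟩
  · -- map_units
    rintro ⟨y, hy⟩
    simp only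
    induction hy using Submonoid.closure_induction with
    | mem x hx =>
      obtain ⟨m, rfl⟩ := hx
      refine isUnit_iff_exists.2 ⟨AddMonoidAlgebra.single (-φ m) 1, ?_, ?_⟩ <;>
        rw [hmap] <;>
        simp [AddMonoidAlgebra.single_mul_single, AddMonoidAlgebra.one_def]
    | one => simp
    | mul x y hx hy ihx ihy => rw [map_mul]; exact ihx.mul ihy
  · -- surj
    intro z
    induction z using AddMonoidAlgebra.induction with
    | zero => exact ⟨⟨0, 1⟩, by simp⟩
    | single_add h c f hf hc ih =>
      obtain ⟨⟨x, s⟩, hx⟩ := ih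
      obtain ⟨a, b, hab⟩ := hsurj h
      have hb1 : AddMonoidAlgebra.single b (1 : ℂ) ∈
          Submonoid.closure (Set.range fun m : M => AddMonoidAlgebra.single m (1 : ℂ)) :=
        Submonoid.subset_closure ⟨b, rfl⟩
      refine ⟨⟨AddMonoidAlgebra.single a c * (s : AddMonoidAlgebra ℂ M) +
        x * AddMonoidAlgebra.single b 1, ⟨AddMonoidAlgebra.single b 1, hb1⟩ * s⟩, ?_⟩
      have key : AddMonoidAlgebra.single h c *
          algebraMap (AddMonoidAlgebra ℂ M) (AddMonoidAlgebra ℂ H)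
            (AddMonoidAlgebra.single b 1) =
          algebraMap (AddMonoidAlgebra ℂ M) (AddMonoidAlgebra ℂ H)
            (AddMonoidAlgebra.single a c) := by
        rw [hmap, hmap, AddMonoidAlgebra.single_mul_single, mul_one]
        congr 1
        rw [← hab]; abel
      simp only [Submonoid.coe_mul, map_add, map_mul]
      rw [← key, ← hx]
      ring
  · -- exists_of_eq
    intro x y h
    refine ⟨1, ?_⟩
    have : AddMonoidAlgebra.mapDomain φ x = AddMonoidAlgebra.mapDomain φ y := h
    rw [AddMonoidAlgebra.mapDomain_injective hinj this]


theorem toric_monoid_prime_and_smooth_chart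
    {G : Type} [AddCommGroup G] [Module.Free ℤ G] [Module.Finite ℤ G]
    (P : AddSubmonoid G) (hfg : P.FG)
    (hsat : ∀ g ∈ AddSubgroup.closure (P : Set G),
      ∀ n : ℕ, 1 ≤ n → n • g ∈ P → g ∈ P)
    (q : Ideal (AddMonoidAlgebra ℂ P)) [hq : q.IsPrime]
    -- `𝔟` = inverse image in `P` of the maximal ideal of `O_{X,x} = ℂ[P]_q`
    (𝔟 : Set G)
    (h𝔟 : 𝔟 = {g : G | ∃ hg : g ∈ P,
      algebraMap (AddMonoidAlgebra ℂ P) (Localization.AtPrime q)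
          (AddMonoidAlgebra.single (⟨g, hg⟩ : P) 1) ∈
        IsLocalRing.maximalIdeal (Localization.AtPrime q)}) :
    -- (1) `𝔟` is a prime ideal of the monoid `P`
    (𝔟 ⊆ (P : Set G)) ∧
    (∀ p ∈ P, ∀ b ∈ 𝔟, p + b ∈ 𝔟) ∧
    (∀ p ∈ P, ∀ p' ∈ P, p + p' ∈ 𝔟 → p ∈ 𝔟 ∨ p' ∈ 𝔟) ∧
    ((0 : G) ∉ 𝔟) ∧
    -- (2)-(3): with `F = P∖𝔟` the corresponding face and `F^{gp}` its groupification: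
    (∃ F : AddSubmonoid G, (F : Set G) = (P : Set G) \ 𝔟 ∧
      -- (2) `ℂ[P]/(𝔟) ≅ ℂ[P∖𝔟]`, where `(𝔟)` is the ideal generated by the
      -- monomials with exponents in `𝔟`
      Nonempty
        ((AddMonoidAlgebra ℂ P ⧸
            Ideal.span {x : AddMonoidAlgebra ℂ P |
              ∃ (g : G) (hg : g ∈ P), g ∈ 𝔟 ∧
                x = AddMonoidAlgebra.single (⟨g, hg⟩ : P) 1}) ≃+*
          AddMonoidAlgebra ℂ F) ∧
      -- (3a) `ℂ[F^{gp}]` is a localization of `ℂ[F]` (at the multiplicative set of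
      -- monomials of the face), i.e. `Spec ℂ[F^{gp}]` is an open subscheme
      (∀ ψ : F →+ AddSubgroup.closure ((P : Set G) \ 𝔟),
        (∀ f : F, ((ψ f : G)) = (f : G)) →
        letI : Algebra (AddMonoidAlgebra ℂ F)
            (AddMonoidAlgebra ℂ (AddSubgroup.closure ((P : Set G) \ 𝔟))) :=
          (AddMonoidAlgebra.mapDomainRingHom ℂ ψ).toAlgebra
        IsLocalization
          (Submonoid.closure
            (Set.range fun f : F => AddMonoidAlgebra.single f (1 : ℂ)))
          (AddMonoidAlgebra ℂ (AddSubgroup.closure ((P : Set G) \ 𝔟)))) ∧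
      -- (3b) `Spec ℂ[F^{gp}]` is smooth over ℂ
      Algebra.FormallySmooth ℂ
        (AddMonoidAlgebra ℂ (AddSubgroup.closure ((P : Set G) \ 𝔟))) ∧
      -- (3c) it contains `x`: the monomials of the face do not vanish at `x`
      (∀ (g : G) (hg : g ∈ P), g ∉ 𝔟 →
        AddMonoidAlgebra.single (⟨g, hg⟩ : P) (1 : ℂ) ∉ q)) := by
  classical
  -- Reduce the definition of `𝔟` to membership in `q`.
  have hb : ∀ g : G, g ∈ 𝔟 ↔ ∃ hg : g ∈ P,
      AddMonoidAlgebra.single (⟨g, hg⟩ : P) (1 : ℂ) ∈ q := by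
    intro g
    rw [h𝔟]
    simp only [Set.mem_setOf_eq]
    constructor
    · rintro ⟨hg, hm⟩
      exact ⟨hg, by rwa [← Localization.AtPrime.comap_maximalIdeal (I := q), Ideal.mem_comap]⟩
    · rintro ⟨hg, hm⟩
      exact ⟨hg, by rwa [← Ideal.mem_comap, ← Ideal.under_def, Localization.AtPrime.comap_maximalIdeal (I := q)]⟩
  have hsub : 𝔟 ⊆ (P : Set G) := fun g hg => ((hb g).1 hg).1
  -- `𝔟` is an ideal
  have hideal : ∀ p ∈ P, ∀ b ∈ 𝔟, p + b ∈ 𝔟 := by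
    intro p hp b hbm
    obtain ⟨hbP, hbq⟩ := (hb b).1 hbm
    refine (hb (p + b)).2 ⟨AddSubmonoid.add_mem P hp hbP, ?_⟩
    have : (AddMonoidAlgebra.single (⟨p + b, AddSubmonoid.add_mem P hp hbP⟩ : P) (1 : ℂ)) =
        AddMonoidAlgebra.single (⟨p, hp⟩ : P) 1 * AddMonoidAlgebra.single (⟨b, hbP⟩ : P) 1 := by
      rw [AddMonoidAlgebra.single_mul_single, one_mul]; rfl
    rw [this]
    exact Ideal.mul_mem_left _ _ hbq
  -- `𝔟` is prime
  have hprime : ∀ p ∈ P, ∀ p' ∈ P, p + p' ∈ 𝔟 → p ∈ 𝔟 ∨ p' ∈ 𝔟 := by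
    intro p hp p' hp' hs
    obtain ⟨hsP, hsq⟩ := (hb (p + p')).1 hs
    have : (AddMonoidAlgebra.single (⟨p + p', hsP⟩ : P) (1 : ℂ)) =
        AddMonoidAlgebra.single (⟨p, hp⟩ : P) 1 * AddMonoidAlgebra.single (⟨p', hp'⟩ : P) 1 := by
      rw [AddMonoidAlgebra.single_mul_single, one_mul]; rfl
    rw [this] at hsq
    rcases hq.mem_or_mem hsq with h | h
    · exact Or.inl ((hb p).2 ⟨hp, h⟩)
    · exact Or.inr ((hb p').2 ⟨hp', h⟩)
  have hzero : (0 : G) ∉ 𝔟 := by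
    intro h0
    obtain ⟨h0P, h0q⟩ := (hb 0).1 h0
    have : (AddMonoidAlgebra.single (⟨(0 : G), h0P⟩ : P) (1 : ℂ)) = 1 := by
      rw [AddMonoidAlgebra.one_def]; rfl
    rw [this] at h0q
    exact hq.ne_top (Ideal.eq_top_of_isUnit_mem q h0q isUnit_one)
  refine ⟨hsub, hideal, hprime, hzero, ?_⟩
  -- The face `F`
  let F : AddSubmonoid G :=
    { carrier := (P : Set G) \ 𝔟
      zero_mem' := ⟨P.zero_mem, hzero⟩
      add_mem' := by
        rintro a b ⟨haP, haB⟩ ⟨hbP, hbB⟩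
        exact ⟨P.add_mem haP hbP, fun h => (hprime a haP b hbP h).elim haB hbB⟩ }
  have hFP : F ≤ P := fun g hg => hg.1
  refine ⟨F, rfl, ?_, ?_, ?_, ?_⟩
  · -- (2) the ring isomorphism
    set S : Set (AddMonoidAlgebra ℂ P) := {x | ∃ (g : G) (hg : g ∈ P), g ∈ 𝔟 ∧
      x = AddMonoidAlgebra.single (⟨g, hg⟩ : P) 1} with hSdef
    let incl : F →+ P := AddSubmonoid.inclusion hFP
    have hincl : Function.Injective incl := by
      intro a b h
      exact Subtype.ext (congrArg (fun x : P => (x : G)) h)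
    let θ : AddMonoidAlgebra ℂ F →+* AddMonoidAlgebra ℂ P :=
      AddMonoidAlgebra.mapDomainRingHom ℂ incl
    let ψr : AddMonoidAlgebra ℂ F →+* (AddMonoidAlgebra ℂ P ⧸ Ideal.span S) :=
      (Ideal.Quotient.mk (Ideal.span S)).comp θ
    have hsupp : ∀ x ∈ Ideal.span S, ∀ a ∈ (x : AddMonoidAlgebra ℂ P).coeff.support, (a : G) ∈ 𝔟 := by
      intro x hx
      induction hx using Submodule.span_induction with
      | mem x hxS =>
        obtain ⟨g, hg, hgb, rfl⟩ := hxS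
        intro a ha
        rw [AddMonoidAlgebra.coeff_single] at ha
        have := Finsupp.support_single_subset ha
        rw [Finset.mem_singleton] at this
        rw [this]
        exact hgb
      | zero => simp
      | add x y hx hy ihx ihy =>
        intro a ha
        rw [AddMonoidAlgebra.coeff_add] at ha
        rcases Finset.mem_union.1 (Finsupp.support_add ha) with h | h
        · exact ihx a h
        · exact ihy a h
      | smul r x hx ihx =>
        intro a ha
        rw [smul_eq_mul] at ha
        obtain ⟨u, hu, v, hv, rfl⟩ := Finset.mem_add.1 (AddMonoidAlgebra.support_coeff_mul_subset r x ha)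
        exact hideal (u : G) u.2 (v : G) (ihx v hv)
    have hinj : Function.Injective ψr := by
      rw [injective_iff_map_eq_zero]
      intro y hy
      have hy' : Ideal.Quotient.mk (Ideal.span S) (θ y) = 0 := hy
      have hmem : θ y ∈ Ideal.span S := by
        rwa [Ideal.Quotient.eq_zero_iff_mem] at hy'
      by_contra hy0
      obtain ⟨u, hu⟩ := Finsupp.support_nonempty_iff.2 (mt AddMonoidAlgebra.coeff_eq_zero.1 hy0)
      have hu' : incl u ∈ (θ y).coeff.support := by
        have hts : (θ y).coeff = Finsupp.mapDomain incl y.coeff := rfl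
        rw [hts, Finsupp.mapDomain_support_of_injective hincl]
        exact Finset.mem_image_of_mem _ hu
      exact u.2.2 (hsupp _ hmem _ hu')
    have hsurj : Function.Surjective ψr := by
      intro z
      obtain ⟨x, rfl⟩ := Ideal.Quotient.mk_surjective z
      induction x using AddMonoidAlgebra.induction with
      | zero => exact ⟨0, by simp⟩
      | single_add p c f hf hc ih =>
        obtain ⟨y, hy⟩ := ih
        by_cases hpb : (p : G) ∈ 𝔟
        · refine ⟨y, ?_⟩
          have h1 : AddMonoidAlgebra.single p (c : ℂ) ∈ Ideal.span S := by
            have : AddMonoidAlgebra.single p (c : ℂ) =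
                AddMonoidAlgebra.single (0 : P) c * AddMonoidAlgebra.single p 1 := by
              rw [AddMonoidAlgebra.single_mul_single, zero_add, mul_one]
            rw [this]
            exact Ideal.mul_mem_left _ _ (Ideal.subset_span ⟨(p : G), p.2, hpb, rfl⟩)
          rw [map_add, hy, Ideal.Quotient.eq_zero_iff_mem.2 h1, zero_add]
        · refine ⟨y + AddMonoidAlgebra.single (⟨(p : G), ⟨p.2, hpb⟩⟩ : F) c, ?_⟩
          rw [map_add, map_add, hy, add_comm]
          congr 1
          show Ideal.Quotient.mk (Ideal.span S) (θ _) = _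
          have : θ (AddMonoidAlgebra.single (⟨(p : G), ⟨p.2, hpb⟩⟩ : F) c) =
              AddMonoidAlgebra.single p c := by
            show AddMonoidAlgebra.mapDomain incl _ = _
            rw [AddMonoidAlgebra.mapDomain_single]
            rfl
          rw [this]
    exact ⟨(RingEquiv.ofBijective ψr ⟨hinj, hsurj⟩).symm⟩
  · -- (3a) localization
    intro ψ' hψ'
    have hinj : Function.Injective ψ' := by
      intro a b h
      apply Subtype.ext
      rw [← hψ' a, ← hψ' b, h]
    have hsurj : ∀ h : AddSubgroup.closure ((P : Set G) \ 𝔟), ∃ a b : F, ψ' a - ψ' b = h := by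
      rintro ⟨h, hh⟩
      have key : ∃ a b : F, (a : G) - (b : G) = h := by
        induction hh using AddSubgroup.closure_induction with
        | mem g hg => exact ⟨⟨g, hg⟩, 0, by simp⟩
        | zero => exact ⟨0, 0, by simp⟩
        | add x y hx hy ihx ihy =>
          obtain ⟨a, b, hab⟩ := ihx
          obtain ⟨a', b', hab'⟩ := ihy
          exact ⟨a + a', b + b', by push_cast; rw [← hab, ← hab']; abel⟩
        | neg x hx ihx =>
          obtain ⟨a, b, hab⟩ := ihx
          exact ⟨b, a, by rw [← hab]; abel⟩
      obtain ⟨a, b, hab⟩ := key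
      exact ⟨a, b, Subtype.ext (by rw [AddSubgroup.coe_sub, hψ' a, hψ' b, hab])⟩
    exact auxLoc ψ' hinj hsurj
  · -- (3b) smoothness
    set H₀ := AddSubgroup.closure ((P : Set G) \ 𝔟) with hH₀
    let N := AddSubgroup.toIntSubmodule H₀
    haveI : IsNoetherian ℤ G := isNoetherian_of_isNoetherianRing_of_finite ℤ G
    haveI hNf : Module.Finite ℤ N := Module.Finite.iff_fg.2 (IsNoetherian.noetherian N)
    haveI : Module.Free ℤ N := Module.free_of_finite_type_torsion_free'
    let ι := Module.Free.ChooseBasisIndex ℤ N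
    let e : (↥H₀) ≃+ (ι →₀ ℤ) := (Module.Free.chooseBasis ℤ N).repr.toAddEquiv
    let E : AddMonoidAlgebra ℂ (↥H₀) ≃ₐ[ℂ] AddMonoidAlgebra ℂ (ι →₀ ℤ) :=
      AddMonoidAlgebra.domCongr ℂ ℂ e
    let φn : (ι →₀ ℕ) →+ (ι →₀ ℤ) := Finsupp.mapRange.addMonoidHom (Nat.castAddMonoidHom ℤ)
    have hinjn : Function.Injective φn := by
      have := Finsupp.mapRange_injective (α := ι) (Nat.cast : ℕ → ℤ) Nat.cast_zero
        Nat.cast_injective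
      exact this
    have hsurjn : ∀ x : (ι →₀ ℤ), ∃ a b : (ι →₀ ℕ), φn a - φn b = x := by
      intro x
      refine ⟨Finsupp.mapRange Int.toNat Int.toNat_zero x, Finsupp.mapRange (fun n => (-n).toNat) (by simp) x, ?_⟩
      ext i
      simp only [Finsupp.sub_apply, Finsupp.mapRange.addMonoidHom_apply, Finsupp.mapRange_apply,
        Nat.castAddMonoidHom, AddMonoidHom.coe_mk, ZeroHom.coe_mk, φn]
      omega
    letI : Algebra (AddMonoidAlgebra ℂ (ι →₀ ℕ)) (AddMonoidAlgebra ℂ (ι →₀ ℤ)) :=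
      (AddMonoidAlgebra.mapDomainRingHom ℂ φn).toAlgebra
    haveI hlocn : IsLocalization
        (Submonoid.closure (Set.range fun m : (ι →₀ ℕ) => AddMonoidAlgebra.single m (1 : ℂ)))
        (AddMonoidAlgebra ℂ (ι →₀ ℤ)) := auxLoc φn hinjn hsurjn
    haveI FS1 : Algebra.FormallySmooth ℂ (AddMonoidAlgebra ℂ (ι →₀ ℕ)) :=
      inferInstanceAs (Algebra.FormallySmooth ℂ (MvPolynomial ι ℂ))
    haveI : IsScalarTower ℂ (AddMonoidAlgebra ℂ (ι →₀ ℕ)) (AddMonoidAlgebra ℂ (ι →₀ ℤ)) := by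
      refine IsScalarTower.of_algebraMap_eq fun c => ?_
      show (AddMonoidAlgebra.single (0 : ι →₀ ℤ) c) =
        AddMonoidAlgebra.mapDomain φn (AddMonoidAlgebra.single (0 : ι →₀ ℕ) c)
      rw [AddMonoidAlgebra.mapDomain_single, map_zero]
    haveI FS2 : Algebra.FormallySmooth (AddMonoidAlgebra ℂ (ι →₀ ℕ))
        (AddMonoidAlgebra ℂ (ι →₀ ℤ)) :=
      Algebra.FormallySmooth.of_isLocalization
        (Submonoid.closure (Set.range fun m : (ι →₀ ℕ) => AddMonoidAlgebra.single m (1 : ℂ)))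
    haveI FS3 : Algebra.FormallySmooth ℂ (AddMonoidAlgebra ℂ (ι →₀ ℤ)) :=
      Algebra.FormallySmooth.comp ℂ (AddMonoidAlgebra ℂ (ι →₀ ℕ)) (AddMonoidAlgebra ℂ (ι →₀ ℤ))
    exact Algebra.FormallySmooth.of_equiv E.symm
  · -- (3c) contains x
    intro g hg hgb hmem
    exact hgb ((hb g).2 ⟨hg, hmem⟩)


end
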